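/- A set X ⊆ F is a weak AXp for (κ, v) if and only if X intersects every CXp of (κ, v); dually, a set Y is a weak CXp if and only if Y intersects every AXp (minimal hitting set duality between abductive and contrastive explanations). -/

import Mathlib

open Finset

/-- `X` is a weak abductive explanation (weak AXp) for classifier `κ` at point `v`:
every point agreeing with `v` on `X` gets the same prediction as `v`. -/
def weakAXp {n : ℕ} (κ : (Fin n → Bool) → Bool) (v : Fin n → Bool)
    (X : Finset (Fin n)) : Prop :=
  ∀ x : Fin n → Bool, (∀ i ∈ X, x i = v i) → κ x = κ v

/-- `X` is an AXp: a subset-minimal weak AXp. -/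
def AXp {n : ℕ} (κ : (Fin n → Bool) → Bool) (v : Fin n → Bool)
    (X : Finset (Fin n)) : Prop :=
  weakAXp κ v X ∧ ∀ X' ⊂ X, ¬ weakAXp κ v X'

/-- `Y` is a weak contrastive explanation (weak CXp) for `κ` at `v`:
some point agreeing with `v` outside `Y` gets a different prediction. -/
def weakCXp {n : ℕ} (κ : (Fin n → Bool) → Bool) (v : Fin n → Bool)
    (Y : Finset (Fin n)) : Prop :=
  ∃ x : Fin n → Bool, (∀ i ∉ Y, x i = v i) ∧ κ x ≠ κ v

/-- `Y` is a CXp: a subset-minimal weak CXp. -/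
def CXp {n : ℕ} (κ : (Fin n → Bool) → Bool) (v : Fin n → Bool)
    (Y : Finset (Fin n)) : Prop :=
  weakCXp κ v Y ∧ ∀ Y' ⊂ Y, ¬ weakCXp κ v Y'

/-- A feature is relevant if it occurs in some AXp. -/
def Relevant {n : ℕ} (κ : (Fin n → Bool) → Bool) (v : Fin n → Bool) (i : Fin n) : Prop :=
  ∃ X, AXp κ v X ∧ i ∈ X

/-- A feature is irrelevant if it occurs in no AXp. -/
def Irrelevant {n : ℕ} (κ : (Fin n → Bool) → Bool) (v : Fin n → Bool) (i : Fin n) : Prop :=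
  ¬ Relevant κ v i

/-- `phi κ v S` : average value of `κ` over points agreeing with `v` on `S`
(uniform distribution). -/
noncomputable def phi {n : ℕ} (κ : (Fin n → Bool) → Bool) (v : Fin n → Bool)
    (S : Finset (Fin n)) : ℝ :=
  (1 / 2 ^ (n - S.card)) *
    ∑ x ∈ Finset.univ.filter (fun x : Fin n → Bool => ∀ i ∈ S, x i = v i),
      (if κ x then (1 : ℝ) else 0)

/-- Shapley value of feature `i` for classifier `κ` at point `v`. -/
noncomputable def Sv {n : ℕ} (κ : (Fin n → Bool) → Bool) (v : Fin n → Bool)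
    (i : Fin n) : ℝ :=
  ∑ S ∈ (Finset.univ.erase i).powerset,
    ((S.card.factorial * (n - S.card - 1).factorial : ℝ) / n.factorial) *
      (phi κ v (insert i S) - phi κ v S)

/-! Both halves are instances of one fact about an upward-closed family `P` of subsets of a finite
type: `s` meets every minimal member of `P` iff `sᶜ ∉ P` (a member of `P` inside `sᶜ` would contain a
minimal one, disjoint from `s`). Weak CXps are upward closed, and `X` is a weak AXp exactly when
`Xᶜ` is not a weak CXp; dually for weak AXps. -/

theorem Finset.forall_minimal_inter_nonempty_iff {α : Type*} [Fintype α] [DecidableEq α]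
    {P : Finset α → Prop} (hP : Monotone P) (s : Finset α) :
    (∀ t, Minimal P t → (s ∩ t).Nonempty) ↔ ¬ P sᶜ := by
  constructor
  · intro hhit hcompl
    obtain ⟨t, hts, ht⟩ := exists_minimal_le_of_wellFoundedLT P sᶜ hcompl
    exact not_disjoint_iff_nonempty_inter.2 (hhit t ht) (subset_compl_iff_disjoint_left.1 hts)
  · intro hcompl t ht
    rw [← not_disjoint_iff_nonempty_inter]
    exact fun hdisj ↦ hcompl (hP (subset_compl_iff_disjoint_left.2 hdisj) ht.prop)

section Explanations

variable {n : ℕ} (κ : (Fin n → Bool) → Bool) (v : Fin n → Bool)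

theorem weakAXp_mono : Monotone (weakAXp κ v) :=
  fun _ _ hXY hY x hx ↦ hY x fun i hi ↦ hx i (hXY hi)

theorem weakCXp_mono : Monotone (weakCXp κ v) :=
  fun _ _ hXY ⟨x, hx, hne⟩ ↦ ⟨x, fun i hi ↦ hx i fun hiX ↦ hi (hXY hiX), hne⟩

theorem weakAXp_iff_not_weakCXp_compl (X : Finset (Fin n)) :
    weakAXp κ v X ↔ ¬ weakCXp κ v Xᶜ := by
  simp only [weakAXp, weakCXp, mem_compl, not_not, not_exists, not_and_or, ne_eq]
  exact forall_congr' fun x ↦ imp_iff_not_or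

theorem weakCXp_iff_not_weakAXp_compl (Y : Finset (Fin n)) :
    weakCXp κ v Y ↔ ¬ weakAXp κ v Yᶜ := by
  rw [weakAXp_iff_not_weakCXp_compl, compl_compl, not_not]

theorem AXp_iff_minimal (X : Finset (Fin n)) : AXp κ v X ↔ Minimal (weakAXp κ v) X :=
  minimal_iff_forall_lt.symm

theorem CXp_iff_minimal (Y : Finset (Fin n)) : CXp κ v Y ↔ Minimal (weakCXp κ v) Y :=
  minimal_iff_forall_lt.symm

end Explanations

theorem stmt2 {n : ℕ} (κ : (Fin n → Bool) → Bool) (v : Fin n → Bool) :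
    (∀ X : Finset (Fin n),
      weakAXp κ v X ↔ ∀ Y, CXp κ v Y → (X ∩ Y).Nonempty) ∧
    (∀ Y : Finset (Fin n),
      weakCXp κ v Y ↔ ∀ X, AXp κ v X → (Y ∩ X).Nonempty) := by
  refine ⟨fun X ↦ ?_, fun Y ↦ ?_⟩
  · simp only [CXp_iff_minimal]
    rw [forall_minimal_inter_nonempty_iff (weakCXp_mono κ v), weakAXp_iff_not_weakCXp_compl]
  · simp only [AXp_iff_minimal]
    rw [forall_minimal_inter_nonempty_iff (weakAXp_mono κ v), weakCXp_iff_not_weakAXp_compl]
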